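/- arXiv:2311.09408 — 2 statements merged into one kernel-verified Lean document; each statement's English description precedes it below -/
import Mathlib

section
/- Assume m > c and 2m > 1, where m = m_u + σ_min(H)² m_y and c = σ_max(H − H_diag) σ_max(H) L_y. Let u* be the unique minimizer of Φ̃, let u∞ be the unique point with F(u∞) = 0, and let y∞ = Hu∞ + d. Then the distance between the globally optimal point and the stationary point of the decentralized controller satisfies ‖u* − u∞‖ ≤ ‖(Hᵀ − H_diag) ∇Φ²(y∞)‖ · √(1/(2m − 1)). -/
/-
Stationarity of `Φ̃` at `u*` reads `∇Φ¹(u*) + Hᵀ∇Φ²(y*) = 0`, while `F(u∞) = 0` gives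
`∇Φ¹(u∞) + Hᵀ∇Φ²(y∞) = e` with `e = (Hᵀ − H_diag)∇Φ²(y∞)`. Pairing the difference with
`Δ = u* − u∞` and using strong monotonicity of both gradients together with
`‖HΔ‖ ≥ σ_min(H)‖Δ‖` gives `m‖Δ‖² ≤ −⟨e, Δ⟩ ≤ (‖e‖² + ‖Δ‖²)/2`, i.e. `(2m − 1)‖Δ‖² ≤ ‖e‖²`.
-/

open RealInnerProductSpace

/-- Largest singular value of a square matrix: the operator 2-norm of `v ↦ M v`
on Euclidean space. -/
noncomputable def sigmaMax {N : ℕ} (M : Matrix (Fin N) (Fin N) ℝ) : ℝ :=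
  ‖Matrix.toEuclideanCLM (𝕜 := ℝ) M‖

/-- Smallest singular value of a square matrix: the infimum of `‖M v‖` over the
unit sphere of Euclidean space. -/
noncomputable def sigmaMin {N : ℕ} (M : Matrix (Fin N) (Fin N) ℝ) : ℝ :=
  sInf ((fun v : EuclideanSpace ℝ (Fin N) => ‖Matrix.toEuclideanCLM (𝕜 := ℝ) M v‖) '' {v | ‖v‖ = 1})

/-- Matrix-vector multiplication as a map on Euclidean space. -/
noncomputable def mulV {N : ℕ} (M : Matrix (Fin N) (Fin N) ℝ) (v : EuclideanSpace ℝ (Fin N)) :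
    EuclideanSpace ℝ (Fin N) :=
  Matrix.toEuclideanCLM (𝕜 := ℝ) M v

section InnerProductSpace

variable {E G : Type*} [NormedAddCommGroup E] [InnerProductSpace ℝ E]
  [NormedAddCommGroup G] [InnerProductSpace ℝ G]

theorem norm_le_norm_mul_sqrt_of_mul_sq_le_inner {x e : E} {m : ℝ} (hm : 1 < 2 * m)
    (h : m * ‖x‖ ^ 2 ≤ ⟪e, x⟫) : ‖x‖ ≤ ‖e‖ * Real.sqrt (1 / (2 * m - 1)) := by
  have hpos : 0 < 2 * m - 1 := by linarith
  have hyoung : 2 * ⟪e, x⟫ ≤ ‖e‖ ^ 2 + ‖x‖ ^ 2 := by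
    linarith [real_inner_le_norm e x, two_mul_le_add_sq ‖e‖ ‖x‖]
  have hsq : ‖x‖ ^ 2 ≤ ‖e‖ ^ 2 * (1 / (2 * m - 1)) := by
    rw [mul_one_div, le_div_iff₀ hpos]
    linarith
  rw [← Real.sqrt_sq (norm_nonneg e), ← Real.sqrt_mul (sq_nonneg _)]
  exact (Real.le_sqrt (norm_nonneg x) (by positivity)).2 hsq

theorem strongly_monotone_pairing_comp_affine {f : E → E} {g : G → G} {A : E →L[ℝ] G}
    {b : G} {μ ν s : ℝ} (hν : 0 ≤ ν) (hs : 0 ≤ s) (hA : ∀ v, s * ‖v‖ ≤ ‖A v‖)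
    (hf : ∀ a a', μ * ‖a - a'‖ ^ 2 ≤ ⟪f a - f a', a - a'⟫)
    (hg : ∀ a a', ν * ‖a - a'‖ ^ 2 ≤ ⟪g a - g a', a - a'⟫) (u u' : E) :
    (μ + s ^ 2 * ν) * ‖u - u'‖ ^ 2 ≤
      ⟪f u - f u', u - u'⟫ + ⟪g (A u + b) - g (A u' + b), A (u - u')⟫ := by
  have hgA := hg (A u + b) (A u' + b)
  rw [add_sub_add_right_eq_sub, ← map_sub] at hgA
  have hsA : (s * ‖u - u'‖) ^ 2 ≤ ‖A (u - u')‖ ^ 2 :=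
    pow_le_pow_left₀ (by positivity) (hA _) 2
  nlinarith [hf u u']

variable [CompleteSpace E] [CompleteSpace G]

theorem inner_gradient_add_inner_gradient_comp_eq_zero {f : E → ℝ} {g : G → ℝ}
    (A : E →L[ℝ] G) (b : G) {x : E} (hf : DifferentiableAt ℝ f x)
    (hg : DifferentiableAt ℝ g (A x + b)) (hmin : IsLocalMin (fun u => f u + g (A u + b)) x)
    (v : E) : ⟪gradient f x, v⟫ + ⟪gradient g (A x + b), A v⟫ = 0 := by
  have hderiv := hf.hasGradientAt.hasFDerivAt.add
    (hg.hasGradientAt.hasFDerivAt.comp x (A.hasFDerivAt.add_const b))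
  simpa using congrArg (· v) (hmin.hasFDerivAt_eq_zero hderiv)

end InnerProductSpace

section Matrix

variable {N : ℕ}

theorem inner_mulV_transpose (M : Matrix (Fin N) (Fin N) ℝ) (x y : EuclideanSpace ℝ (Fin N)) :
    ⟪mulV M.transpose x, y⟫ = ⟪x, mulV M y⟫ := by
  rw [mulV, mulV, ← Matrix.conjTranspose_eq_transpose_of_trivial, ← Matrix.star_eq_conjTranspose,
    map_star, ContinuousLinearMap.star_eq_adjoint, ContinuousLinearMap.adjoint_inner_left]

theorem mulV_sub_left (M M' : Matrix (Fin N) (Fin N) ℝ) (x : EuclideanSpace ℝ (Fin N)) :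
    mulV (M - M') x = mulV M x - mulV M' x := by
  simp only [mulV, map_sub, sub_apply]

theorem sigmaMin_nonneg (M : Matrix (Fin N) (Fin N) ℝ) : 0 ≤ sigmaMin M :=
  Real.sInf_nonneg (by rintro _ ⟨v, -, rfl⟩; exact norm_nonneg _)

theorem sigmaMin_mul_norm_le (M : Matrix (Fin N) (Fin N) ℝ) (v : EuclideanSpace ℝ (Fin N)) :
    sigmaMin M * ‖v‖ ≤ ‖mulV M v‖ := by
  rcases eq_or_ne v 0 with rfl | hv
  · simp [mulV]
  have hbdd : BddBelow ((fun v : EuclideanSpace ℝ (Fin N) =>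
      ‖Matrix.toEuclideanCLM (𝕜 := ℝ) M v‖) '' {v | ‖v‖ = 1}) :=
    ⟨0, by rintro _ ⟨w, -, rfl⟩; exact norm_nonneg _⟩
  have hnorm : 0 < ‖v‖ := norm_pos_iff.2 hv
  have hunit : ‖(‖v‖⁻¹ • v : EuclideanSpace ℝ (Fin N))‖ = 1 := by
    rw [norm_smul, norm_inv, norm_norm, inv_mul_cancel₀ hnorm.ne']
  have hle : sigmaMin M ≤ ‖Matrix.toEuclideanCLM (𝕜 := ℝ) M (‖v‖⁻¹ • v)‖ :=
    csInf_le hbdd ⟨_, hunit, rfl⟩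
  rw [map_smul, norm_smul, norm_inv, norm_norm, inv_mul_eq_div, le_div_iff₀ hnorm] at hle
  exact hle

end Matrix

theorem stmt7_general {N : ℕ}
(H : Matrix (Fin N) (Fin N) ℝ) (d : EuclideanSpace ℝ (Fin N))
    (Φ1 Φ2 : EuclideanSpace ℝ (Fin N) → ℝ)
    (mu my : ℝ)
    (hmy : 0 < my)
    (hΦ1diff : Differentiable ℝ Φ1) (hΦ2diff : Differentiable ℝ Φ2)
    (hΦ1mono : ∀ a b, mu * ‖a - b‖ ^ 2 ≤ ⟪gradient Φ1 a - gradient Φ1 b, a - b⟫)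
    (hΦ2mono : ∀ a b, my * ‖a - b‖ ^ 2 ≤ ⟪gradient Φ2 a - gradient Φ2 b, a - b⟫)
    (Hdiag : Matrix (Fin N) (Fin N) ℝ)
    (F : EuclideanSpace ℝ (Fin N) → EuclideanSpace ℝ (Fin N))
    (hF : ∀ u, F u = gradient Φ1 u + mulV Hdiag (gradient Φ2 (mulV H u + d)))
    (m : ℝ)
    (hm : m = mu + sigmaMin H ^ 2 * my)
    (h2m : 2 * m > 1)
    (ustar : EuclideanSpace ℝ (Fin N))
    (hustar : ∀ u, Φ1 ustar + Φ2 (mulV H ustar + d) ≤ Φ1 u + Φ2 (mulV H u + d))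
    (uinf yinf : EuclideanSpace ℝ (Fin N))
    (huinf : F uinf = 0)
    (hyinf : yinf = mulV H uinf + d) :
    ‖ustar - uinf‖ ≤
      ‖mulV (H.transpose - Hdiag) (gradient Φ2 yinf)‖ * Real.sqrt (1 / (2 * m - 1)) := by
  let A := Matrix.toEuclideanCLM (𝕜 := ℝ) H
  have hyA : yinf = A uinf + d := hyinf
  have hstat := inner_gradient_add_inner_gradient_comp_eq_zero A d (hΦ1diff ustar)
    (hΦ2diff _) (Filter.Eventually.of_forall hustar) (ustar - uinf)
  have hmono := strongly_monotone_pairing_comp_affine (A := A) (b := d) hmy.le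
    (sigmaMin_nonneg H) (sigmaMin_mul_norm_le H) hΦ1mono hΦ2mono ustar uinf
  rw [← hm, ← hyA, inner_sub_left, inner_sub_left] at hmono
  have hzero : gradient Φ1 uinf = -mulV Hdiag (gradient Φ2 yinf) := by
    have h := hF uinf
    rw [huinf, ← hyinf] at h
    exact eq_neg_of_add_eq_zero_left h.symm
  have hresidual : ⟪gradient Φ1 uinf, ustar - uinf⟫ + ⟪gradient Φ2 yinf, A (ustar - uinf)⟫ =
      ⟪mulV (H.transpose - Hdiag) (gradient Φ2 yinf), ustar - uinf⟫ := by
    rw [hzero, mulV_sub_left, inner_sub_left, inner_neg_left, inner_mulV_transpose]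
    exact neg_add_eq_sub _ _
  set e := mulV (H.transpose - Hdiag) (gradient Φ2 yinf)
  have hkey : m * ‖ustar - uinf‖ ^ 2 ≤ ⟪-e, ustar - uinf⟫ := by
    rw [inner_neg_left]
    linarith
  simpa using norm_le_norm_mul_sqrt_of_mul_sq_le_inner h2m hkey

/-- Theorem 3: sub-optimality bound.
Assume `m > c` and `2m > 1`. If `u*` is the unique minimizer of
`Φ̃(u) = Φ¹(u) + Φ²(Hu + d)` and `u∞` is the unique zero of the decentralized
pseudo-gradient `F`, with `y∞ = H u∞ + d`, then
`‖u* − u∞‖ ≤ ‖(Hᵀ − H_diag) ∇Φ²(y∞)‖ √(1/(2m − 1))`. -/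
theorem stmt7 {N : ℕ} (hN : 0 < N)
(H : Matrix (Fin N) (Fin N) ℝ) (d : EuclideanSpace ℝ (Fin N))
    (Φ1 Φ2 : EuclideanSpace ℝ (Fin N) → ℝ)
    (mu Lu my Ly : ℝ)
    (hmu : 0 < mu) (hmuLu : mu ≤ Lu) (hmy : 0 < my) (hmyLy : my ≤ Ly)
    (hΦ1diff : Differentiable ℝ Φ1) (hΦ2diff : Differentiable ℝ Φ2)
    (hΦ1mono : ∀ a b, mu * ‖a - b‖ ^ 2 ≤ ⟪gradient Φ1 a - gradient Φ1 b, a - b⟫)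
    (hΦ1lip : ∀ a b, ‖gradient Φ1 a - gradient Φ1 b‖ ≤ Lu * ‖a - b‖)
    (hΦ2mono : ∀ a b, my * ‖a - b‖ ^ 2 ≤ ⟪gradient Φ2 a - gradient Φ2 b, a - b⟫)
    (hΦ2lip : ∀ a b, ‖gradient Φ2 a - gradient Φ2 b‖ ≤ Ly * ‖a - b‖)
    (Hdiag : Matrix (Fin N) (Fin N) ℝ)
    (hHdiag : Hdiag = Matrix.diagonal (fun i => H i i))
    (F : EuclideanSpace ℝ (Fin N) → EuclideanSpace ℝ (Fin N))
    (hF : ∀ u, F u = gradient Φ1 u + mulV Hdiag (gradient Φ2 (mulV H u + d)))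
    (m c : ℝ)
    (hm : m = mu + sigmaMin H ^ 2 * my)
    (hc : c = sigmaMax (H - Hdiag) * sigmaMax H * Ly)
    (hmc : m > c) (h2m : 2 * m > 1)
    (ustar : EuclideanSpace ℝ (Fin N))
    (hustar : ∀ u, Φ1 ustar + Φ2 (mulV H ustar + d) ≤ Φ1 u + Φ2 (mulV H u + d))
    (uinf yinf : EuclideanSpace ℝ (Fin N))
    (huinf : F uinf = 0)
    (hyinf : yinf = mulV H uinf + d) :
    ‖ustar - uinf‖ ≤
      ‖mulV (H.transpose - Hdiag) (gradient Φ2 yinf)‖ * Real.sqrt (1 / (2 * m - 1)) :=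
  stmt7_general H d Φ1 Φ2 mu my hmy hΦ1diff hΦ2diff hΦ1mono hΦ2mono Hdiag F hF m hm h2m ustar hustar
    uinf yinf huinf hyinf
end

section
/- Assume m > c and let u∞ be the unique point with ∇Φ¹(u∞) + H_diag ∇Φ²(Hu∞ + d) = 0, and y∞ = Hu∞ + d. For any x, u ∈ ℝ^N, set y = C x + D u + d, φ₁ = ∇Φ¹(u) + H_diag ∇Φ²(y), and φ₂ = x − H_x u. Then ‖φ₁‖ ≤ (L_u + L_y σ_max(H_diag) σ_max(H)) ‖u − u∞‖ + L_y σ_max(H_diag) σ_max(C) ‖φ₂‖. -/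
open RealInnerProductSpace

lemma mulV_bound {N : ℕ} (M : Matrix (Fin N) (Fin N) ℝ) (v : EuclideanSpace ℝ (Fin N)) :
    ‖mulV M v‖ ≤ sigmaMax M * ‖v‖ :=
  (Matrix.toEuclideanCLM (𝕜 := ℝ) M).le_opNorm v

lemma mulV_sub {N : ℕ} (M : Matrix (Fin N) (Fin N) ℝ) (v w : EuclideanSpace ℝ (Fin N)) :
    mulV M (v - w) = mulV M v - mulV M w := map_sub _ v w

lemma mulV_add {N : ℕ} (M : Matrix (Fin N) (Fin N) ℝ) (v w : EuclideanSpace ℝ (Fin N)) :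
    mulV M (v + w) = mulV M v + mulV M w := map_add _ v w

lemma mulV_matAdd {N : ℕ} (M M' : Matrix (Fin N) (Fin N) ℝ) (v : EuclideanSpace ℝ (Fin N)) :
    mulV (M + M') v = mulV M v + mulV M' v := by
  simp [mulV, map_add]

lemma mulV_mul {N : ℕ} (M M' : Matrix (Fin N) (Fin N) ℝ) (v : EuclideanSpace ℝ (Fin N)) :
    mulV (M * M') v = mulV M (mulV M' v) := by
  simp [mulV, map_mul]

/-- preparatory lemma, part 4.
With `y = Cx + Du + d`, `φ₁ = ∇Φ¹(u) + H_diag∇Φ²(y)`, `φ₂ = x − H_x u`, and `y∞ = Hu∞ + d`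
for the stationary point `u∞`:
`‖φ₁‖ ≤ (L_u + L_y σ_max(H_diag)σ_max(H))‖u − u∞‖ + L_y σ_max(H_diag)σ_max(C)‖φ₂‖`. -/
theorem stmt15 {N : ℕ} (hN : 0 < N)
    (A B C D : Matrix (Fin N) (Fin N) ℝ) (hinv : IsUnit (1 - A))
    (d : EuclideanSpace ℝ (Fin N))
    (Φ1 Φ2 : EuclideanSpace ℝ (Fin N) → ℝ)
    (mu Lu my Ly : ℝ)
    (hmu : 0 < mu) (hmuLu : mu ≤ Lu) (hmy : 0 < my) (hmyLy : my ≤ Ly)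
    (hΦ1diff : Differentiable ℝ Φ1) (hΦ2diff : Differentiable ℝ Φ2)
    (hΦ1mono : ∀ a b, mu * ‖a - b‖ ^ 2 ≤ ⟪gradient Φ1 a - gradient Φ1 b, a - b⟫)
    (hΦ1lip : ∀ a b, ‖gradient Φ1 a - gradient Φ1 b‖ ≤ Lu * ‖a - b‖)
    (hΦ2mono : ∀ a b, my * ‖a - b‖ ^ 2 ≤ ⟪gradient Φ2 a - gradient Φ2 b, a - b⟫)
    (hΦ2lip : ∀ a b, ‖gradient Φ2 a - gradient Φ2 b‖ ≤ Ly * ‖a - b‖)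
    (Hx H Hdiag : Matrix (Fin N) (Fin N) ℝ)
    (hHx : Hx = (1 - A)⁻¹ * B)
    (hH : H = C * Hx + D)
    (hHdiag : Hdiag = Matrix.diagonal (fun i => H i i))
    (m c : ℝ)
    (hm : m = mu + sigmaMin H ^ 2 * my)
    (hc : c = sigmaMax (H - Hdiag) * sigmaMax H * Ly)
    (hmc : m > c)
    (uinf yinf : EuclideanSpace ℝ (Fin N))
    (huinf : gradient Φ1 uinf + mulV Hdiag (gradient Φ2 (mulV H uinf + d)) = 0)
    (hyinf : yinf = mulV H uinf + d) :
    ∀ x u : EuclideanSpace ℝ (Fin N),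
      ‖gradient Φ1 u + mulV Hdiag (gradient Φ2 (mulV C x + mulV D u + d))‖ ≤
        (Lu + Ly * sigmaMax Hdiag * sigmaMax H) * ‖u - uinf‖ +
          Ly * sigmaMax Hdiag * sigmaMax C * ‖x - mulV Hx u‖ := by
  intro x u
  have hLy : (0:ℝ) ≤ Ly := le_trans hmy.le hmyLy
  set y : EuclideanSpace ℝ (Fin N) := mulV C x + mulV D u + d with hy
  set yi : EuclideanSpace ℝ (Fin N) := mulV H uinf + d with hyi
  have key : gradient Φ1 u + mulV Hdiag (gradient Φ2 y)
      = (gradient Φ1 u - gradient Φ1 uinf)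
        + mulV Hdiag (gradient Φ2 y - gradient Φ2 yi) := by
    rw [mulV_sub]
    linear_combination (norm := abel) huinf
  have hyd : y - yi = mulV C (x - mulV Hx u) + mulV H (u - uinf) := by
    rw [hy, hyi, hH]
    simp only [mulV_sub, mulV_add, mulV_mul, mulV_matAdd]
    abel
  have hny : ‖y - yi‖ ≤ sigmaMax C * ‖x - mulV Hx u‖ + sigmaMax H * ‖u - uinf‖ := by
    rw [hyd]
    exact (norm_add_le _ _).trans (add_le_add (mulV_bound _ _) (mulV_bound _ _))
  have h1 := hΦ1lip u uinf
  have h2 : ‖mulV Hdiag (gradient Φ2 y - gradient Φ2 yi)‖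
      ≤ sigmaMax Hdiag * (Ly * ‖y - yi‖) :=
    (mulV_bound _ _).trans (by
      exact mul_le_mul_of_nonneg_left (hΦ2lip y yi) (norm_nonneg _))
  calc ‖gradient Φ1 u + mulV Hdiag (gradient Φ2 y)‖
      ≤ ‖gradient Φ1 u - gradient Φ1 uinf‖
        + ‖mulV Hdiag (gradient Φ2 y - gradient Φ2 yi)‖ := by
        rw [key]; exact norm_add_le _ _
    _ ≤ Lu * ‖u - uinf‖ + sigmaMax Hdiag * (Ly * ‖y - yi‖) := add_le_add h1 h2
    _ ≤ Lu * ‖u - uinf‖ + sigmaMax Hdiag *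
          (Ly * (sigmaMax C * ‖x - mulV Hx u‖ + sigmaMax H * ‖u - uinf‖)) := by
        have hs : (0:ℝ) ≤ sigmaMax Hdiag := norm_nonneg _
        gcongr
    _ = (Lu + Ly * sigmaMax Hdiag * sigmaMax H) * ‖u - uinf‖ +
          Ly * sigmaMax Hdiag * sigmaMax C * ‖x - mulV Hx u‖ := by ring
end
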